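/- arXiv:2104.12821 — 2 statements merged into one kernel-verified Lean document; each statement's English description precedes it below -/
import Mathlib

section
/- Let p ≥ 1. For a ring with Z-basis {x_s^+, x_s^- : 1 ≤ s ≤ p} satisfying the fusion rules of rep(W_p), the Frobenius–Perron dimension of each basis element x_s^± equals s, i.e., the unique ring homomorphism to ℝ taking positive values on the basis sends x_s^± to s. -/
/-!
Put `d = φ(x₂⁺)`. Since `x₁⁻` squares to the unit and `φ(x₁⁻) > 0`, `φ(x₁⁻) = 1`, so `φ` takes
the same value on `x_s^+` and `x_s^-`. The fusion rule for `x₂⁺ · x_s` is the recurrence of the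
rescaled Chebyshev polynomials `S`, hence `φ(x_s^±) = S_{s-1}(d)`. With `y = S_{p-1}(d)` and
`x = S_{p-2}(d)`, the last fusion rule reads `d y = 2 + 2 x`, while the Chebyshev identity
`x² + y² - d x y = 1` turns it into `y² = (x + 1)² = (d y / 2)²`; as `y > 0`, this forces `d = 2`,
and `S_{s-1}(2) = s`.
-/

/-- Fusion rules of rep(W_p), with guards so that they make sense for all p ≥ 1. -/
def fusionRulesW (p : ℕ) (hp : 1 ≤ p) {K : Type} [CommRing K]
    (B : Module.Basis (Bool × Fin p) ℤ K) : Prop :=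
  B (true, ⟨0, by omega⟩) = 1 ∧
  (∀ (ε : Bool) (s : Fin p), B (false, ⟨0, by omega⟩) * B (ε, s) = B (!ε, s)) ∧
  (∀ (ε : Bool) (s : ℕ) (hs1 : 1 ≤ s) (hs2 : s + 2 ≤ p),
    B (true, ⟨1, by omega⟩) * B (ε, ⟨s, by omega⟩)
      = B (ε, ⟨s - 1, by omega⟩) + B (ε, ⟨s + 1, by omega⟩)) ∧
  (∀ h2 : 2 ≤ p, ∀ ε : Bool, B (true, ⟨1, by omega⟩) * B (ε, ⟨p - 1, by omega⟩)
      = 2 * B (!ε, ⟨0, by omega⟩) + 2 * B (ε, ⟨p - 2, by omega⟩))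

open Polynomial Polynomial.Chebyshev

theorem eq_two_of_mul_S_eval_eq {d : ℝ} (hd : 0 < d) (n : ℤ) (hy : 0 < (S ℝ (n + 1)).eval d)
    (hboundary : d * (S ℝ (n + 1)).eval d = 2 + 2 * (S ℝ n).eval d) : d = 2 := by
  set x := (S ℝ n).eval d
  set y := (S ℝ (n + 1)).eval d
  have hinv : x ^ 2 + y ^ 2 - d * x * y = 1 := by
    simpa using congrArg (eval d) (S_sq_add_S_sq ℝ n)
  have key : (d - 2) * ((d + 2) * y ^ 2) = 0 := by
    linear_combination (d * y + 2 - 2 * x) * hboundary - 4 * hinv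
  have : (d + 2) * y ^ 2 ≠ 0 := by positivity
  linarith [(mul_eq_zero.mp key).resolve_right this]

namespace fusionRulesW

variable {p : ℕ} {hp : 1 ≤ p} {K : Type} [CommRing K] {B : Module.Basis (Bool × Fin p) ℤ K}

theorem map_B_false_zero_eq_one (hK : fusionRulesW p hp B) (φ : K →+* ℝ)
    (hpos : 0 < φ (B (false, ⟨0, hp⟩))) : φ (B (false, ⟨0, hp⟩)) = 1 := by
  have hsq := congrArg φ (hK.2.1 false ⟨0, hp⟩)
  rw [map_mul, Bool.not_false, hK.1, map_one] at hsq
  nlinarith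

theorem map_B_false (hK : fusionRulesW p hp B) (φ : K →+* ℝ)
    (hpos : 0 < φ (B (false, ⟨0, hp⟩))) (s : Fin p) : φ (B (false, s)) = φ (B (true, s)) := by
  have h := congrArg φ (hK.2.1 true s)
  rwa [map_mul, hK.map_B_false_zero_eq_one φ hpos, one_mul, Bool.not_true, eq_comm] at h

theorem map_B_true_eq_S_eval (hK : fusionRulesW p hp B) (φ : K →+* ℝ) (hp2 : 2 ≤ p) :
    ∀ (s : ℕ) (hs : s < p), φ (B (true, ⟨s, hs⟩)) = (S ℝ s).eval (φ (B (true, ⟨1, hp2⟩)))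
  | 0, _ => by simp [hK.1]
  | 1, _ => by simp
  | n + 2, hs => by
    set d := φ (B (true, ⟨1, hp2⟩))
    have hrule := congrArg φ (hK.2.2.1 true (n + 1) (by omega) hs)
    rw [map_mul, map_add] at hrule
    have hrec : d * φ (B (true, ⟨n + 1, by omega⟩))
        = φ (B (true, ⟨n, by omega⟩)) + φ (B (true, ⟨n + 2, hs⟩)) := hrule
    rw [hK.map_B_true_eq_S_eval φ hp2 (n + 1), hK.map_B_true_eq_S_eval φ hp2 n] at hrec
    push_cast at hrec ⊢
    rw [S_add_two, eval_sub, eval_mul, eval_X]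
    linarith

theorem map_B_true_one_eq_two (hK : fusionRulesW p hp B) (φ : K →+* ℝ) (hpos : ∀ i, 0 < φ (B i))
    (hp2 : 2 ≤ p) : φ (B (true, ⟨1, hp2⟩)) = 2 := by
  obtain ⟨m, rfl⟩ : ∃ m, p = m + 2 := ⟨p - 2, by omega⟩
  have hrule := congrArg φ (hK.2.2.2 hp2 true)
  simp only [map_add, map_mul, map_ofNat, Bool.not_true,
    hK.map_B_false_zero_eq_one φ (hpos _)] at hrule
  have hy := hK.map_B_true_eq_S_eval φ hp2 (m + 1) (by omega)
  have hboundary : φ (B (true, ⟨1, hp2⟩)) * φ (B (true, ⟨m + 1, by omega⟩))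
      = 2 * 1 + 2 * φ (B (true, ⟨m, by omega⟩)) := hrule
  rw [hy, hK.map_B_true_eq_S_eval φ hp2 m, mul_one] at hboundary
  refine eq_two_of_mul_S_eval_eq (hpos _) m ?_ (mod_cast hboundary)
  exact_mod_cast hy ▸ hpos (true, ⟨m + 1, by omega⟩)

end fusionRulesW

/-- Indices are 0-based: `B (ε, s)` is `x_{s+1}^±`, with `ε = true` for `+`. -/
theorem stmt14 (p : ℕ) (hp : 1 ≤ p) (K : Type) [CommRing K]
    (B : Module.Basis (Bool × Fin p) ℤ K) (hK : fusionRulesW p hp B)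
    (φ : K →+* ℝ) (hpos : ∀ i, 0 < φ (B i)) :
    ∀ (ε : Bool) (s : Fin p), φ (B (ε, s)) = (s : ℝ) + 1 := by
  have htrue : ∀ s : Fin p, φ (B (true, s)) = (s : ℝ) + 1 := by
    rintro ⟨s, hs⟩
    rcases Nat.lt_or_ge p 2 with hp1 | hp2
    · obtain rfl : s = 0 := by omega
      simp [hK.1]
    · rw [hK.map_B_true_eq_S_eval φ hp2 s hs, hK.map_B_true_one_eq_two φ hpos hp2, S_eval_two]
      push_cast
      rfl
  rintro (_ | _) s
  · rw [hK.map_B_false φ (hpos _), htrue]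
  · exact htrue s
end

section
/- Let p ≥ 2 and q = e^{πi/p}. The twist eigenvalue on X₂⁺ ⊗ X_p^± (values -e^{3πip/2} or 1) differs from the scalar θ(X₂⁺)·θ(X_p^±), which equals e^{3πip/2}·q or q respectively; explicitly (-1)^p q^{(p²-1)/2} q^{3/2} = e^{3πip/2} q and ( -e^{3πip/2} q^{(p²-1)/2})·(-q^{3/2}) = q, and in both cases the ratio of the twist eigenvalue to this scalar is not 1. -/
/-!
The two identities are additivity of the exponent together with `(-1)^p = exp (p π i)` and
`exp (2 p π i) = 1`. Both ratios reduce to `q ≠ -1` and `q ≠ 1`, which hold because for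
`p ≥ 2` the angle `π / p` lies in `(0, π)`, so `q` has positive imaginary part and is not real.
-/

open Complex

lemma neg_one_pow_eq_exp (p : ℕ) : (-1 : ℂ) ^ p = exp (p * (Real.pi * I)) := by
  rw [exp_nat_mul, exp_pi_mul_I]

lemma im_exp_pi_mul_I_div_pos {p : ℕ} (hp : 2 ≤ p) : 0 < (exp (Real.pi * I / p)).im := by
  have hpR : (2 : ℝ) ≤ p := by exact_mod_cast hp
  have hangle : Real.pi * I / p = ((Real.pi / p : ℝ) : ℂ) * I := by
    push_cast
    ring
  rw [hangle, exp_ofReal_mul_I_im]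
  apply Real.sin_pos_of_pos_of_lt_pi (by positivity)
  rw [div_lt_iff₀ (by positivity)]
  nlinarith [Real.pi_pos]

lemma ne_one_and_ne_neg_one_of_im_pos {z : ℂ} (hz : 0 < z.im) : z ≠ 1 ∧ z ≠ -1 := by
  constructor <;> rintro rfl <;> simp at hz

/-- For p ≥ 2 and q = e^{πi/p} (q^x = e^{πix/p}, e = e^{3πip/2}):
    (-1)^p q^{(p²-1)/2} q^{3/2} = e·q and (-e·q^{(p²-1)/2})·(-q^{3/2}) = q, while the ratios
    (-e)/(e·q) and 1/q of the corresponding twist eigenvalues to these scalars are not 1. -/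
theorem stmt17 (p : ℕ) (hp : 2 ≤ p)
    (q q32 e qp2 : ℂ)
    (hq : q = Complex.exp (Real.pi * Complex.I / (p : ℂ)))
    (hq32 : q32 = Complex.exp (Real.pi * Complex.I * (3 / 2) / (p : ℂ)))
    (he : e = Complex.exp (3 * Real.pi * Complex.I * (p : ℂ) / 2))
    (hqp2 : qp2 = Complex.exp (Real.pi * Complex.I * (((p : ℂ) ^ 2 - 1) / 2) / (p : ℂ))) :
    (-1 : ℂ) ^ p * qp2 * q32 = e * q ∧
    (-e * qp2) * (-q32) = q ∧
    (-e) / (e * q) ≠ 1 ∧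
    (1 : ℂ) / q ≠ 1 := by
  have hp0 : (p : ℂ) ≠ 0 := Nat.cast_ne_zero.mpr (by omega)
  have hq0 : q ≠ 0 := hq ▸ exp_ne_zero _
  have he0 : e ≠ 0 := he ▸ exp_ne_zero _
  obtain ⟨hq1, hqneg1⟩ := ne_one_and_ne_neg_one_of_im_pos (hq ▸ im_exp_pi_mul_I_div_pos hp)
  have hsum : e * qp2 * q32 = exp (p * (2 * Real.pi * I)) * q := by
    simp only [hq, hq32, he, hqp2, ← exp_add]
    congr 1
    field_simp
    ring
  refine ⟨?_, ?_, ?_, ?_⟩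
  · simp only [neg_one_pow_eq_exp, hq, hq32, he, hqp2, ← exp_add]
    congr 1
    field_simp
    ring
  · calc (-e * qp2) * (-q32) = e * qp2 * q32 := by ring
      _ = q := by rw [hsum, exp_nat_mul_two_pi_mul_I, one_mul]
  · rw [Ne, div_eq_one_iff_eq (mul_ne_zero he0 hq0)]
    intro h
    exact hqneg1 (mul_left_cancel₀ he0 (by linear_combination -h))
  · rwa [Ne, div_eq_one_iff_eq hq0, eq_comm]
end
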